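/- With SPARQL filters F, their three-valued semantics F^s ∈ {⊤, ⊥, ε} over solution mappings s : V → Option C, SQL filters over tuples t : V → Option C, and the translation τ replacing each atom bound(v) by ¬isNull(v), as defined previously: for every SPARQL filter F and every set S of solution mappings s : V → Option C, {s ∈ S | F^s = ⊤} = {s ∈ S | (τ(F))^s = ⊤}, i.e. the SPARQL Filter operator applied to S coincides with the SQL selection σ_{τ(F)} applied to the relation representing S. -/
import Mathlib


/-- Three truth values: true, false, error. -/
inductive TV3 : Type
  | t : TV3
  | f : TV3
  | e : TV3
deriving DecidableEq

/-- Three-valued negation: `ε` is absorbing, otherwise classical. -/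
def TV3.neg : TV3 → TV3
  | TV3.t => TV3.f
  | TV3.f => TV3.t
  | TV3.e => TV3.e

/-- Three-valued conjunction: `⊥` if either is `⊥`, `⊤` if both are `⊤`,
`ε` otherwise. -/
def TV3.and : TV3 → TV3 → TV3
  | TV3.f, _ => TV3.f
  | _, TV3.f => TV3.f
  | TV3.t, TV3.t => TV3.t
  | _, _ => TV3.e

/-- SPARQL filters over variables `V` and constants `C`. -/
inductive SparqlFilter (V C : Type*) : Type _
  | bound : V → SparqlFilter V C
  | eqc : V → C → SparqlFilter V C
  | eqv : V → V → SparqlFilter V C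
  | not : SparqlFilter V C → SparqlFilter V C
  | and : SparqlFilter V C → SparqlFilter V C → SparqlFilter V C

/-- SQL filters: same grammar with `isNull` in place of `bound`. -/
inductive SqlFilter (V C : Type*) : Type _
  | isNull : V → SqlFilter V C
  | eqc : V → C → SqlFilter V C
  | eqv : V → V → SqlFilter V C
  | not : SqlFilter V C → SqlFilter V C
  | and : SqlFilter V C → SqlFilter V C → SqlFilter V C

/-- Three-valued semantics of SPARQL filters over a solution mapping
`s : V → Option C` (`none` = unbound). -/
def SparqlFilter.eval {V C : Type*} [DecidableEq C] (s : V → Option C) :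
    SparqlFilter V C → TV3
  | SparqlFilter.bound v => if s v = none then TV3.f else TV3.t
  | SparqlFilter.eqc v c =>
      match s v with
      | none => TV3.e
      | some a => if a = c then TV3.t else TV3.f
  | SparqlFilter.eqv v v' =>
      match s v, s v' with
      | some a, some b => if a = b then TV3.t else TV3.f
      | _, _ => TV3.e
  | SparqlFilter.not F => (F.eval s).neg
  | SparqlFilter.and F₁ F₂ => (F₁.eval s).and (F₂.eval s)

/-- Three-valued semantics of SQL filters over a tuple `t : V → Option C`
(`none` = SQL null). -/
def SqlFilter.eval {V C : Type*} [DecidableEq C] (t : V → Option C) :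
    SqlFilter V C → TV3
  | SqlFilter.isNull v => if t v = none then TV3.t else TV3.f
  | SqlFilter.eqc v c =>
      match t v with
      | none => TV3.e
      | some a => if a = c then TV3.t else TV3.f
  | SqlFilter.eqv v v' =>
      match t v, t v' with
      | some a, some b => if a = b then TV3.t else TV3.f
      | _, _ => TV3.e
  | SqlFilter.not F => (F.eval t).neg
  | SqlFilter.and F₁ F₂ => (F₁.eval t).and (F₂.eval t)

/-- The translation `τ` from SPARQL filters to SQL filters, replacing each
atom `bound(v)` by `¬ isNull(v)`. -/
def filterToSql {V C : Type*} : SparqlFilter V C → SqlFilter V C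
  | SparqlFilter.bound v => SqlFilter.not (SqlFilter.isNull v)
  | SparqlFilter.eqc v c => SqlFilter.eqc v c
  | SparqlFilter.eqv v v' => SqlFilter.eqv v v'
  | SparqlFilter.not F => SqlFilter.not (filterToSql F)
  | SparqlFilter.and F₁ F₂ => SqlFilter.and (filterToSql F₁) (filterToSql F₂)

/-- Appendix theorem, Filter case: the SPARQL `Filter` operator on a set of
solution mappings coincides with the SQL selection by the translated filter. -/
theorem sparql_filter_eq_sql_selection {V C : Type*} [DecidableEq C]
    (F : SparqlFilter V C) (S : Set (V → Option C)) :
    {s ∈ S | F.eval s = TV3.t} = {s ∈ S | (filterToSql F).eval s = TV3.t} := by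
  have h : ∀ (G : SparqlFilter V C) (s : V → Option C),
      (filterToSql G).eval s = G.eval s := by
    intro G s
    induction G with
    | bound v =>
        simp only [filterToSql, SqlFilter.eval, SparqlFilter.eval]
        split <;> rfl
    | eqc v c => rfl
    | eqv v v' => rfl
    | not F ih => simp [filterToSql, SqlFilter.eval, SparqlFilter.eval, ih]
    | and F₁ F₂ ih₁ ih₂ =>
        simp [filterToSql, SqlFilter.eval, SparqlFilter.eval, ih₁, ih₂]
  ext s
  simp [h]
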